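/- Let δ be a delay function that is non-constant on (−δ∞, ∞), and define γ := inf{Δ > 0 : Δ − δ∞ + δ(Δ − δ∞) > 0}. If the forgetful single-history channel algorithm with delay function δ and initial value 0 is applied to the input event list consisting of the two events (S,1) and (T,0) with 0 ≤ S < T and T − S < γ, then the final output list consists only of the initial event (−∞, 0) (i.e., the channel output is the constant-zero signal). -/
import Mathlib


open scoped Classical

/-- The value of the last event of an output list (stored in reverse order, the most
recent event first); the implicit initial event is `(−∞, x)`. -/
def lastVal (x : Bool) : List (ℝ × Bool) → Bool
  | [] => x
  | e :: _ => e.2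

/-- One iteration of the forgetful single-history channel algorithm. -/
noncomputable def fstep (δ : ℝ → ℝ) (dinfty : ℝ) (x : Bool)
    (S : List (ℝ × Bool)) (e : ℝ × Bool) : List (ℝ × Bool) :=
  if e.2 = lastVal x S then S
  else
    match S with
    | [] => [(e.1 + dinfty, e.2)]
    | (t', b) :: rest =>
        if t' < e.1 + δ (e.1 - t') then (e.1 + δ (e.1 - t'), e.2) :: (t', b) :: rest
        else rest

/-- let `δ` be a delay function that is non-constant on `(−δ∞, ∞)` and let
`γ = inf {Δ > 0 | Δ − δ∞ + δ(Δ − δ∞) > 0}`.  Running the forgetful single-history channel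
algorithm with initial value `0` on the input event list `(S,1), (T,0)` with
`0 ≤ S < T` and `T − S < γ` leaves only the initial event `(−∞, 0)`:
the channel output is the constant-zero signal. -/
theorem short_pulse_filtered (δ : ℝ → ℝ) (dinfty : ℝ)
    (hmono : Monotone δ)
    (hlim : Filter.Tendsto δ Filter.atTop (nhds dinfty))
    (hpos : 0 < dinfty)
    (hnc : ∃ u v : ℝ, -dinfty < u ∧ -dinfty < v ∧ δ u ≠ δ v)
    (S T : ℝ) (hS : 0 ≤ S) (hST : S < T)
    (hshort : T - S < sInf {Δ : ℝ | 0 < Δ ∧ 0 < Δ - dinfty + δ (Δ - dinfty)}) :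
    fstep δ dinfty false (fstep δ dinfty false [] (S, true)) (T, false) = [] := by
  have h1 : fstep δ dinfty false [] (S, true) = [(S + dinfty, true)] := by
    simp [fstep, lastVal]
  rw [h1]
  have hbdd : BddBelow {Δ : ℝ | 0 < Δ ∧ 0 < Δ - dinfty + δ (Δ - dinfty)} :=
    ⟨0, fun x hx => le_of_lt hx.1⟩
  have hkey : ¬ (0 < (T - S) - dinfty + δ ((T - S) - dinfty)) := by
    intro h
    have hmem : (T - S) ∈ {Δ : ℝ | 0 < Δ ∧ 0 < Δ - dinfty + δ (Δ - dinfty)} :=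
      ⟨sub_pos.mpr hST, h⟩
    exact absurd (csInf_le hbdd hmem) (not_le.mpr hshort)
  have hcond : ¬ (S + dinfty < T + δ (T - (S + dinfty))) := by
    intro h
    apply hkey
    have : T - (S + dinfty) = (T - S) - dinfty := by ring
    rw [this] at h
    linarith
  simp [fstep, lastVal, hcond]
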